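/- For every finite field F_q and every integer N ≥ 3, B̄*(2) ≥ B̄*(3). -/
import Mathlib


open scoped Classical

/-- Membership in the class 𝓛 : first column zero, both entries of the
second column nonzero. -/
def matL {F : Type*} [Field F] (B : Matrix (Fin 2) (Fin 2) F) : Prop :=
  (∀ p, B p 0 = 0) ∧ (∀ p, B p 1 ≠ 0)

/-- Membership in the class 𝓡 : second column zero, both entries of the
first column nonzero. -/
def matR {F : Type*} [Field F] (B : Matrix (Fin 2) (Fin 2) F) : Prop :=
  (∀ p, B p 1 = 0) ∧ (∀ p, B p 0 ≠ 0)

/-- Partial sums `ℓ*_r = ℓ_1 + ⋯ + ℓ_r` of a tuple `ℓ` (0-indexed: the sum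
of the entries of index `< r`). -/
def psum {R : ℕ} (ℓ : Fin R → ℕ) (r : ℕ) : ℕ :=
  ∑ k ∈ Finset.univ.filter (fun k : Fin R => (k : ℕ) < r), ℓ k

/-- The defining conditions for membership of an `R × N` array of 2×2 blocks
in the class `H(R, R_L, ℓ)`:
(i) the blocks in row `r` and columns `ℓ*_{r-1} < i ≤ ℓ*_r` (1-indexed) are
invertible;
(ii) in the first `R_L` rows every block of `𝓛 ∪ 𝓡` lies in `𝓛`, and in the
remaining rows every block of `𝓛 ∪ 𝓡` lies in `𝓡`;
(iii) no two distinct rows among the first `R_L` have two common distinct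
columns with all four blocks in `𝓛`, and no two distinct rows among the
remaining ones have two common distinct columns with all four blocks in `𝓡`. -/
def memH {F : Type*} [Field F] (N R RL : ℕ) (ℓ : Fin R → ℕ)
    (H : Fin R → Fin N → Matrix (Fin 2) (Fin 2) F) : Prop :=
  (∀ (r : Fin R) (i : Fin N),
      psum ℓ (r : ℕ) ≤ (i : ℕ) → (i : ℕ) < psum ℓ ((r : ℕ) + 1) → IsUnit (H r i)) ∧
  (∀ (r : Fin R) (j : Fin N), (r : ℕ) < RL →
      (matL (H r j) ∨ matR (H r j)) → matL (H r j)) ∧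
  (∀ (r : Fin R) (j : Fin N), RL ≤ (r : ℕ) →
      (matL (H r j) ∨ matR (H r j)) → matR (H r j)) ∧
  (¬ ∃ (r₁ r₂ : Fin R) (i j : Fin N), r₁ ≠ r₂ ∧ i ≠ j ∧
      (r₁ : ℕ) < RL ∧ (r₂ : ℕ) < RL ∧
      matL (H r₁ i) ∧ matL (H r₂ i) ∧ matL (H r₁ j) ∧ matL (H r₂ j)) ∧
  (¬ ∃ (r₁ r₂ : Fin R) (i j : Fin N), r₁ ≠ r₂ ∧ i ≠ j ∧
      RL ≤ (r₁ : ℕ) ∧ RL ≤ (r₂ : ℕ) ∧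
      matR (H r₁ i) ∧ matR (H r₂ i) ∧ matR (H r₁ j) ∧ matR (H r₂ j))

/-- `|J_r(H̄)|`, the number of columns whose block in row `r` lies in `𝓛 ∪ 𝓡`. -/
noncomputable def Jcard {F : Type*} [Field F] {N R : ℕ}
    (H : Fin R → Fin N → Matrix (Fin 2) (Fin 2) F) (r : Fin R) : ℕ :=
  (Finset.univ.filter (fun j : Fin N => matL (H r j) ∨ matR (H r j))).card

/-- The bandwidth `B(H̄) = 2N(N-1) - Σ_r ℓ_r·|J_r(H̄)|` of a configuration. -/
noncomputable def BH {F : Type*} [Field F] {R : ℕ} (N : ℕ) (ℓ : Fin R → ℕ)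
    (H : Fin R → Fin N → Matrix (Fin 2) (Fin 2) F) : ℤ :=
  2 * (N : ℤ) * ((N : ℤ) - 1) - ∑ r, (ℓ r : ℤ) * (Jcard H r : ℤ)

/-- The set of bandwidths of all configurations in
`H(R) = ⋃_{R_L, ℓ} H(R, R_L, ℓ)`. -/
def bandSet (F : Type*) [Field F] (N R : ℕ) : Set ℤ :=
  {b | ∃ (RL : ℕ) (ℓ : Fin R → ℕ)
        (H : Fin R → Fin N → Matrix (Fin 2) (Fin 2) F),
      RL ≤ R ∧ (∀ r, 1 ≤ ℓ r) ∧ (∑ r, ℓ r) = N ∧ memH N R RL ℓ H ∧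
      b = BH N ℓ H}

-- L ∪ R blocks are not invertible
lemma not_isUnit_of_matL {F : Type*} [Field F] {B : Matrix (Fin 2) (Fin 2) F}
    (h : matL B) : ¬ IsUnit B := by
  intro hu
  rw [Matrix.isUnit_iff_isUnit_det, Matrix.det_fin_two, h.1 0, h.1 1] at hu
  simp at hu

lemma not_isUnit_of_matR {F : Type*} [Field F] {B : Matrix (Fin 2) (Fin 2) F}
    (h : matR B) : ¬ IsUnit B := by
  intro hu
  rw [Matrix.isUnit_iff_isUnit_det, Matrix.det_fin_two, h.1 0, h.1 1] at hu
  simp at hu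

lemma psum_zero {R : ℕ} (ℓ : Fin R → ℕ) : psum ℓ 0 = 0 := by
  simp [psum]

lemma psum_succ {R : ℕ} (ℓ : Fin R → ℕ) (r : ℕ) (h : r < R) :
    psum ℓ (r + 1) = psum ℓ r + ℓ ⟨r, h⟩ := by
  unfold psum
  have : Finset.univ.filter (fun k : Fin R => (k : ℕ) < r + 1)
      = insert ⟨r, h⟩ (Finset.univ.filter (fun k : Fin R => (k : ℕ) < r)) := by
    ext k
    simp only [Finset.mem_filter, Finset.mem_insert, Finset.mem_univ, true_and, Fin.ext_iff]
    omega
  rw [this, Finset.sum_insert (by simp), add_comm]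

-- card of an interval-type filter on Fin N
lemma card_filter_fin {N : ℕ} (p : Fin N → Prop) [DecidablePred p] (s : Finset ℕ)
    (hs : ∀ x, x ∈ s ↔ ∃ h : x < N, p ⟨x, h⟩) :
    (Finset.univ.filter p).card = s.card := by
  rw [← Finset.card_image_of_injective (Finset.univ.filter p) Fin.val_injective]
  congr 1
  ext x
  simp only [Finset.mem_image, Finset.mem_filter, Finset.mem_univ, true_and, hs]
  constructor
  · rintro ⟨i, hi, rfl⟩; exact ⟨i.isLt, hi⟩
  · rintro ⟨h, hp⟩; exact ⟨⟨x, h⟩, hp, rfl⟩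

lemma psum_mono {R : ℕ} (ℓ : Fin R → ℕ) {r s : ℕ} (h : r ≤ s) : psum ℓ r ≤ psum ℓ s := by
  apply Finset.sum_le_sum_of_subset
  intro k hk
  simp only [Finset.mem_filter, Finset.mem_univ, true_and] at *
  omega

lemma psum_all {R : ℕ} (ℓ : Fin R → ℕ) : psum ℓ R = ∑ r, ℓ r := by
  unfold psum
  congr 1
  ext k
  simp [k.isLt]

lemma Jcard_add_le {F : Type*} [Field F] {N R : ℕ} (ℓ : Fin R → ℕ)
    (H : Fin R → Fin N → Matrix (Fin 2) (Fin 2) F)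
    (hsum : (∑ r, ℓ r) = N)
    (hinv : ∀ (r : Fin R) (i : Fin N),
      psum ℓ (r : ℕ) ≤ (i : ℕ) → (i : ℕ) < psum ℓ ((r : ℕ) + 1) → IsUnit (H r i))
    (r : Fin R) : Jcard H r + ℓ r ≤ N := by
  classical
  set J := Finset.univ.filter (fun j : Fin N => matL (H r j) ∨ matR (H r j)) with hJ
  set Bd := Finset.univ.filter
    (fun i : Fin N => psum ℓ (r : ℕ) ≤ (i : ℕ) ∧ (i : ℕ) < psum ℓ ((r : ℕ) + 1)) with hBd
  have hpsumN : psum ℓ ((r : ℕ) + 1) ≤ N := by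
    calc psum ℓ ((r : ℕ) + 1) ≤ psum ℓ R := psum_mono ℓ r.isLt
    _ = N := by rw [psum_all, hsum]
  have hBdcard : Bd.card = ℓ r := by
    rw [hBd, card_filter_fin _ (Finset.Ico (psum ℓ (r : ℕ)) (psum ℓ ((r : ℕ) + 1)))]
    · rw [Nat.card_Ico, psum_succ ℓ (r : ℕ) r.isLt]
      simp
    · intro x
      simp only [Finset.mem_Ico]
      constructor
      · rintro ⟨h1, h2⟩; exact ⟨lt_of_lt_of_le h2 hpsumN, h1, h2⟩
      · rintro ⟨h, h1, h2⟩; exact ⟨h1, h2⟩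
  have hdisj : Disjoint J Bd := by
    rw [Finset.disjoint_left]
    intro i hiJ hiBd
    rw [hJ, Finset.mem_filter] at hiJ
    rw [hBd, Finset.mem_filter] at hiBd
    have hu := hinv r i hiBd.2.1 hiBd.2.2
    rcases hiJ.2 with h | h
    · exact not_isUnit_of_matL h hu
    · exact not_isUnit_of_matR h hu
  have : Jcard H r + ℓ r = (J ∪ Bd).card := by
    rw [Finset.card_union_of_disjoint hdisj, hBdcard]; rfl
  rw [this]
  calc (J ∪ Bd).card ≤ (Finset.univ : Finset (Fin N)).card := Finset.card_le_card (Finset.subset_univ _)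
  _ = N := Finset.card_univ.trans (Fintype.card_fin N)

section mats
variable {F : Type*} [Field F]

noncomputable def Lmat : Matrix (Fin 2) (Fin 2) F := !![0, 1; 0, 1]
noncomputable def Rmat : Matrix (Fin 2) (Fin 2) F := !![1, 0; 1, 0]

lemma matL_Lmat : matL (Lmat : Matrix (Fin 2) (Fin 2) F) := by
  constructor <;> intro p <;> fin_cases p <;> simp [Lmat, matL]

lemma matR_Rmat : matR (Rmat : Matrix (Fin 2) (Fin 2) F) := by
  constructor <;> intro p <;> fin_cases p <;> simp [Rmat, matR]

lemma not_matL_Rmat : ¬ matL (Rmat : Matrix (Fin 2) (Fin 2) F) := by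
  rintro ⟨h, -⟩
  have := h 0
  simp [Rmat] at this

lemma not_matR_Lmat : ¬ matR (Lmat : Matrix (Fin 2) (Fin 2) F) := by
  rintro ⟨h, -⟩
  have := h 0
  simp [Lmat] at this

lemma not_matL_one : ¬ matL (1 : Matrix (Fin 2) (Fin 2) F) := by
  rintro ⟨h, -⟩
  have := h 0
  simp [Matrix.one_apply] at this

lemma not_matR_one : ¬ matR (1 : Matrix (Fin 2) (Fin 2) F) := by
  rintro ⟨h, -⟩
  have := h 1
  simp [Matrix.one_apply] at this

lemma not_matL_zero : ¬ matL (0 : Matrix (Fin 2) (Fin 2) F) := by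
  rintro ⟨-, h⟩
  exact h 0 rfl

lemma not_matR_zero : ¬ matR (0 : Matrix (Fin 2) (Fin 2) F) := by
  rintro ⟨-, h⟩
  exact h 0 rfl

end mats

section construction
variable (F : Type*) [Field F]

/-- The three-row configuration: row 0 has band `[0,a)` and `𝓛`-blocks elsewhere;
row 1 has band `[a, N-1)` and `𝓡`-blocks elsewhere; row 2 has band `{N-1}`,
`𝓡`-blocks at column `0` and columns `[a, N-1)`, and zero blocks elsewhere. -/
noncomputable def Hc (N a : ℕ) : Fin 3 → Fin N → Matrix (Fin 2) (Fin 2) F :=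
  fun r j =>
    if (r : ℕ) = 0 then (if (j : ℕ) < a then 1 else Lmat)
    else if (r : ℕ) = 1 then (if a ≤ (j : ℕ) ∧ (j : ℕ) < N - 1 then 1 else Rmat)
    else (if (j : ℕ) = N - 1 then 1
          else if (j : ℕ) = 0 ∨ a ≤ (j : ℕ) then Rmat else 0)

variable {N a : ℕ} (ha1 : 1 ≤ a) (ha2 : a + 2 ≤ N)

lemma psum_c1 : psum (![a, N - a - 1, 1] : Fin 3 → ℕ) 1 = a := by
  have h := psum_succ (![a, N - a - 1, 1] : Fin 3 → ℕ) 0 (by omega)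
  rw [psum_zero] at h
  simpa using h

lemma psum_c2 : psum (![a, N - a - 1, 1] : Fin 3 → ℕ) 2 = a + (N - a - 1) := by
  have h := psum_succ (![a, N - a - 1, 1] : Fin 3 → ℕ) 1 (by omega)
  rw [psum_c1] at h
  simpa using h

lemma psum_c3 : psum (![a, N - a - 1, 1] : Fin 3 → ℕ) 3 = a + (N - a - 1) + 1 := by
  have h := psum_succ (![a, N - a - 1, 1] : Fin 3 → ℕ) 2 (by omega)
  rw [psum_c2] at h
  simpa using h
/-- The key column restriction forced on common `𝓡`-columns of rows 1 and 2. -/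
lemma Hc_col_zero {i : Fin N} (h1 : matR (Hc F N a 1 i)) (h2 : matR (Hc F N a 2 i)) :
    (i : ℕ) = 0 := by
  unfold Hc at h1 h2
  norm_num at h1 h2
  by_cases hb : a ≤ (i : ℕ) ∧ (i : ℕ) < N - 1
  · rw [if_pos hb] at h1; exact absurd h1 not_matR_one
  by_cases hN1 : (i : ℕ) = N - 1
  · rw [if_pos hN1] at h2; exact absurd h2 not_matR_one
  rw [if_neg hN1] at h2
  by_cases h0 : (i : ℕ) = 0 ∨ a ≤ (i : ℕ)
  · have := i.isLt
    omega
  · rw [if_neg h0] at h2; exact absurd h2 not_matR_zero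

lemma memH_Hc : memH N 3 1 (![a, N - a - 1, 1] : Fin 3 → ℕ) (Hc F N a) := by
  refine ⟨?_, ?_, ?_, ?_, ?_⟩
  · -- invertibility on the bands
    intro r i hlow hhigh
    have h3 : (r : ℕ) = 0 ∨ (r : ℕ) = 1 ∨ (r : ℕ) = 2 := by omega
    unfold Hc
    rcases h3 with h | h | h <;> rw [h] at hlow hhigh ⊢ <;> norm_num
    · rw [show (0 : ℕ) + 1 = 1 from rfl, psum_c1] at hhigh
      rw [if_pos hhigh]
      exact isUnit_one
    · rw [psum_c1] at hlow
      rw [show (1 : ℕ) + 1 = 2 from rfl, psum_c2] at hhigh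
      rw [if_pos ⟨hlow, by omega⟩]
      exact isUnit_one
    · rw [psum_c2] at hlow
      rw [show (2 : ℕ) + 1 = 3 from rfl, psum_c3] at hhigh
      rw [if_pos (show (i : ℕ) = N - 1 by omega)]
      exact isUnit_one
  · -- rows < 1 : L-side
    intro r j hr hLR
    have hr0 : (r : ℕ) = 0 := by omega
    unfold Hc at hLR ⊢
    rw [hr0] at hLR ⊢
    norm_num at hLR ⊢
    by_cases hj : (j : ℕ) < a
    · rw [if_pos hj] at hLR
      rcases hLR with h | h
      · exact absurd h not_matL_one
      · exact absurd h not_matR_one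
    · rw [if_neg hj] at hLR ⊢
      exact matL_Lmat
  · -- rows ≥ 1 : R-side
    intro r j hr hLR
    have hr12 : (r : ℕ) = 1 ∨ (r : ℕ) = 2 := by omega
    unfold Hc at hLR ⊢
    rcases hr12 with hr1 | hr2
    · rw [hr1] at hLR ⊢
      norm_num at hLR ⊢
      by_cases hj : a ≤ (j : ℕ) ∧ (j : ℕ) < N - 1
      · rw [if_pos hj] at hLR
        rcases hLR with h | h
        · exact absurd h not_matL_one
        · exact absurd h not_matR_one
      · rw [if_neg hj] at hLR ⊢
        exact matR_Rmat
    · rw [hr2] at hLR ⊢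
      norm_num at hLR ⊢
      by_cases hj1 : (j : ℕ) = N - 1
      · rw [if_pos hj1] at hLR
        rcases hLR with h | h
        · exact absurd h not_matL_one
        · exact absurd h not_matR_one
      · rw [if_neg hj1] at hLR ⊢
        by_cases hj0 : (j : ℕ) = 0 ∨ a ≤ (j : ℕ)
        · rw [if_pos hj0] at hLR ⊢
          exact matR_Rmat
        · rw [if_neg hj0] at hLR
          rcases hLR with h | h
          · exact absurd h not_matL_zero
          · exact absurd h not_matR_zero
  · -- no bad L-pair : only row 0 is on the L side
    rintro ⟨r₁, r₂, i, j, hr, -, h₁, h₂, -⟩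
    exact hr (Fin.ext (by omega))
  · -- no bad R-pair
    rintro ⟨r₁, r₂, i, j, hr, hij, h₁, h₂, hRi₁, hRi₂, hRj₁, hRj₂⟩
    have hv1 : (r₁ : ℕ) = 1 ∨ (r₁ : ℕ) = 2 := by omega
    have hv2 : (r₂ : ℕ) = 1 ∨ (r₂ : ℕ) = 2 := by omega
    have hne : (r₁ : ℕ) ≠ (r₂ : ℕ) := fun h => hr (Fin.ext h)
    have hr1 : r₁ = 1 ∧ r₂ = 2 ∨ r₁ = 2 ∧ r₂ = 1 := by
      rcases hv1 with h | h <;> rcases hv2 with h' | h'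
      · omega
      · exact Or.inl ⟨Fin.ext h, Fin.ext h'⟩
      · exact Or.inr ⟨Fin.ext h, Fin.ext h'⟩
      · omega
    have hi0 : (i : ℕ) = 0 := by
      rcases hr1 with ⟨e1, e2⟩ | ⟨e1, e2⟩
      · exact Hc_col_zero F (e1 ▸ hRi₁) (e2 ▸ hRi₂)
      · exact Hc_col_zero F (e2 ▸ hRi₂) (e1 ▸ hRi₁)
    have hj0 : (j : ℕ) = 0 := by
      rcases hr1 with ⟨e1, e2⟩ | ⟨e1, e2⟩
      · exact Hc_col_zero F (e1 ▸ hRj₁) (e2 ▸ hRj₂)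
      · exact Hc_col_zero F (e2 ▸ hRj₂) (e1 ▸ hRj₁)
    exact hij (Fin.ext (by omega))

lemma Jcard_Hc0 : Jcard (Hc F N a) 0 = N - a := by
  unfold Jcard
  rw [card_filter_fin _ (Finset.Ico a N)]
  · rw [Nat.card_Ico]
  · intro x
    simp only [Finset.mem_Ico]
    constructor
    · rintro ⟨hax, hxN⟩
      refine ⟨hxN, ?_⟩
      unfold Hc
      norm_num
      rw [if_neg (by omega)]
      exact Or.inl matL_Lmat
    · rintro ⟨hxN, hLR⟩
      unfold Hc at hLR
      norm_num at hLR
      by_cases hx : x < a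
      · rw [if_pos hx] at hLR
        rcases hLR with h | h
        · exact absurd h not_matL_one
        · exact absurd h not_matR_one
      · exact ⟨by omega, hxN⟩

lemma Jcard_Hc1 (ha2 : a + 2 ≤ N) : Jcard (Hc F N a) 1 = a + 1 := by
  unfold Jcard
  rw [card_filter_fin _ (Finset.range a ∪ {N - 1})]
  · rw [Finset.card_union_of_disjoint (by simp [Finset.disjoint_singleton_right]; omega)]
    simp
  · intro x
    simp only [Finset.mem_union, Finset.mem_range, Finset.mem_singleton]
    constructor
    · rintro hx
      have hxN : x < N := by omega
      refine ⟨hxN, ?_⟩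
      unfold Hc
      norm_num
      rw [if_neg (by omega)]
      exact Or.inr matR_Rmat
    · rintro ⟨hxN, hLR⟩
      unfold Hc at hLR
      norm_num at hLR
      by_cases hx : a ≤ x ∧ x < N - 1
      · rw [if_pos hx] at hLR
        rcases hLR with h | h
        · exact absurd h not_matL_one
        · exact absurd h not_matR_one
      · omega

lemma Jcard_Hc2 (ha1 : 1 ≤ a) (ha2 : a + 2 ≤ N) :
    Jcard (Hc F N a) 2 = 1 + (N - 1 - a) := by
  unfold Jcard
  rw [card_filter_fin _ ({0} ∪ Finset.Ico a (N - 1))]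
  · rw [Finset.card_union_of_disjoint (by simp [Finset.disjoint_singleton_left]; omega)]
    simp
  · intro x
    simp only [Finset.mem_union, Finset.mem_Ico, Finset.mem_singleton]
    constructor
    · rintro hx
      have hxN : x < N := by omega
      refine ⟨hxN, ?_⟩
      unfold Hc
      norm_num
      rw [if_neg (show ¬ x = N - 1 by omega), if_pos (by omega)]
      exact Or.inr matR_Rmat
    · rintro ⟨hxN, hLR⟩
      unfold Hc at hLR
      norm_num at hLR
      by_cases hx1 : x = N - 1
      · rw [if_pos hx1] at hLR
        rcases hLR with h | h
        · exact absurd h not_matL_one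
        · exact absurd h not_matR_one
      · rw [if_neg hx1] at hLR
        by_cases hx0 : x = 0 ∨ a ≤ x
        · omega
        · rw [if_neg hx0] at hLR
          rcases hLR with h | h
          · exact absurd h not_matL_zero
          · exact absurd h not_matR_zero

end construction

theorem statement14 (F : Type*) [Field F] [Fintype F] (N : ℕ) (hN : 3 ≤ N) :
    ∀ b ∈ bandSet F N 2, ∃ b' ∈ bandSet F N 3, b' ≤ b := by
  intro b hb
  obtain ⟨RL, ℓ, H, hRL, hl1, hlsum, hmem, rfl⟩ := hb
  set a : ℕ := N / 2 with ha
  have ha1 : 1 ≤ a := by omega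
  have ha2 : a + 2 ≤ N := by omega
  set d : ℕ := N - a - 1 with hd
  have hd1 : 1 ≤ d := by omega
  have hadN : a + d + 1 = N := by omega
  have hda : d ≤ a ∧ a ≤ d + 1 := by omega
  refine ⟨BH N (![a, d, 1] : Fin 3 → ℕ) (Hc F N a),
    ⟨1, ![a, d, 1], Hc F N a, by omega, ?_, ?_, memH_Hc F, rfl⟩, ?_⟩
  · intro r
    fin_cases r <;> simp <;> omega
  · rw [Fin.sum_univ_three]
    simp
    omega
  · unfold BH
    apply sub_le_sub_left
    rw [Fin.sum_univ_two, Fin.sum_univ_three]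
    have hJ0 := Jcard_add_le ℓ H hlsum hmem.1 0
    have hJ1 := Jcard_add_le ℓ H hlsum hmem.1 1
    rw [Jcard_Hc0, Jcard_Hc1 F ha2, Jcard_Hc2 F ha1 ha2]
    have e0 : N - a = d + 1 := by omega
    have e2 : N - 1 - a = d := by omega
    rw [e0, e2]
    simp only [Matrix.cons_val_zero, Matrix.cons_val_one, Matrix.head_cons,
      Matrix.cons_val_two, Matrix.tail_cons]
    -- pass to integers
    have hsN : ℓ 0 + ℓ 1 = N := by rw [← hlsum, Fin.sum_univ_two]
    have hsZ : (ℓ 0 : ℤ) + (ℓ 1 : ℤ) = (N : ℤ) := by exact_mod_cast hsN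
    have hJ0Z : (Jcard H 0 : ℤ) + (ℓ 0 : ℤ) ≤ (N : ℤ) := by exact_mod_cast hJ0
    have hJ1Z : (Jcard H 1 : ℤ) + (ℓ 1 : ℤ) ≤ (N : ℤ) := by exact_mod_cast hJ1
    have hl0Z : (1 : ℤ) ≤ (ℓ 0 : ℤ) := by exact_mod_cast hl1 0
    have hl1Z : (1 : ℤ) ≤ (ℓ 1 : ℤ) := by exact_mod_cast hl1 1
    have hadNZ : (a : ℤ) + (d : ℤ) + 1 = (N : ℤ) := by exact_mod_cast hadN
    have hdaZ : (d : ℤ) ≤ (a : ℤ) ∧ (a : ℤ) ≤ (d : ℤ) + 1 := by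
      exact ⟨by exact_mod_cast hda.1, by exact_mod_cast hda.2⟩
    have hd1Z : (1 : ℤ) ≤ (d : ℤ) := by exact_mod_cast hd1
    have hJ0nn : (0 : ℤ) ≤ (Jcard H 0 : ℤ) := by positivity
    have hJ1nn : (0 : ℤ) ≤ (Jcard H 1 : ℤ) := by positivity
    have e1 : (ℓ 0 : ℤ) * (Jcard H 0 : ℤ) ≤ (ℓ 0 : ℤ) * ((N : ℤ) - (ℓ 0 : ℤ)) :=
      mul_le_mul_of_nonneg_left (by linarith) (by linarith)
    have e2 : (ℓ 1 : ℤ) * (Jcard H 1 : ℤ) ≤ (ℓ 1 : ℤ) * ((N : ℤ) - (ℓ 1 : ℤ)) :=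
      mul_le_mul_of_nonneg_left (by linarith) (by linarith)
    have key : (ℓ 0 : ℤ) * ((N : ℤ) - (ℓ 0 : ℤ)) + (ℓ 1 : ℤ) * ((N : ℤ) - (ℓ 1 : ℤ))
        ≤ (a : ℤ) * ((d : ℤ) + 1) + (d : ℤ) * ((a : ℤ) + 1) + (1 + (d : ℤ)) := by
      nlinarith [sq_nonneg ((ℓ 0 : ℤ) - (ℓ 1 : ℤ)),
        mul_nonneg (sub_nonneg.2 hdaZ.1) (sub_nonneg.2 hdaZ.2)]
    push_cast
    linarith
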